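/- Let A and B(p) be formulas of the basic modal language (with ⊥, ⊤, propositional variables, ¬, ∨, ∧, ◇, □) such that the propositional variable p does not occur in A, and every occurrence of p in B(p) is under an odd number of negations (B is negative in p). Then for any Kripke model M = (W, R, V), the formula B(A/p) (B with A substituted for p) is true at every world of M if and only if there exists a valuation V' differing from V at most on p such that both A → p and B(p) are true at every world of (W, R, V'). -/
import Mathlib


inductive MF : Type where
  | bot
  | top
  | var (p : Nat)
  | neg (φ : MF)
  | or (φ ψ : MF)
  | and (φ ψ : MF)
  | dia (φ : MF)
  | box (φ : MF)

/-- Implication, defined as usual. -/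
def MF.imp (φ ψ : MF) : MF := MF.or (MF.neg φ) ψ

/-- Kripke satisfaction: truth of a modal formula at a world. -/
def sat {W : Type} (R : W → W → Prop) (V : Nat → Set W) : MF → W → Prop
  | .bot, _ => False
  | .top, _ => True
  | .var p, w => w ∈ V p
  | .neg φ, w => ¬ sat R V φ w
  | .or φ ψ, w => sat R V φ w ∨ sat R V ψ w
  | .and φ ψ, w => sat R V φ w ∧ sat R V ψ w
  | .dia φ, w => ∃ v, R w v ∧ sat R V φ v
  | .box φ, w => ∀ v, R w v → sat R V φ v
mutual
/-- All occurrences of `p` are under an even number of negations. -/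
def positiveIn (p : Nat) : MF → Prop
  | .bot => True
  | .top => True
  | .var _ => True
  | .neg φ => negativeIn p φ
  | .or φ ψ => positiveIn p φ ∧ positiveIn p ψ
  | .and φ ψ => positiveIn p φ ∧ positiveIn p ψ
  | .dia φ => positiveIn p φ
  | .box φ => positiveIn p φ

/-- All occurrences of `p` are under an odd number of negations. -/
def negativeIn (p : Nat) : MF → Prop
  | .bot => True
  | .top => True
  | .var q => q ≠ p
  | .neg φ => positiveIn p φ
  | .or φ ψ => negativeIn p φ ∧ negativeIn p ψ
  | .and φ ψ => negativeIn p φ ∧ negativeIn p ψ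
  | .dia φ => negativeIn p φ
  | .box φ => negativeIn p φ
end
/-- `p` occurs in the formula. -/
def occurs (p : Nat) : MF → Prop
  | .bot => False
  | .top => False
  | .var q => q = p
  | .neg φ => occurs p φ
  | .or φ ψ => occurs p φ ∨ occurs p ψ
  | .and φ ψ => occurs p φ ∨ occurs p ψ
  | .dia φ => occurs p φ
  | .box φ => occurs p φ

/-- Uniform substitution of `A` for the variable `p`. -/
def subst (p : Nat) (A : MF) : MF → MF
  | .bot => .bot
  | .top => .top
  | .var q => if q = p then A else .var q
  | .neg φ => .neg (subst p A φ)
  | .or φ ψ => .or (subst p A φ) (subst p A ψ)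
  | .and φ ψ => .and (subst p A φ) (subst p A ψ)
  | .dia φ => .dia (subst p A φ)
  | .box φ => .box (subst p A φ)

lemma sat_congr {W : Type} (R : W → W → Prop) (V V' : Nat → Set W) (p : Nat)
    (h : ∀ q, q ≠ p → V' q = V q) :
    ∀ φ, ¬ occurs p φ → ∀ w, (sat R V' φ w ↔ sat R V φ w) := by
  intro φ
  induction φ <;> intro hφ w <;> simp_all [sat, occurs]

lemma sat_subst {W : Type} (R : W → W → Prop) (V : Nat → Set W) (A : MF) (p : Nat) :
    ∀ φ w, sat R V (subst p A φ) w ↔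
      sat R (fun q => if q = p then {w | sat R V A w} else V q) φ w := by
  intro φ
  induction φ <;> intro w <;> simp_all [subst, sat]
  case var q =>
    by_cases hq : q = p <;> simp [hq, sat, Set.mem_setOf_eq]

lemma sat_mono {W : Type} (R : W → W → Prop) (V V' : Nat → Set W) (p : Nat)
    (h : ∀ q, q ≠ p → V q = V' q) (hsub : V p ⊆ V' p) :
    ∀ φ, (positiveIn p φ → ∀ w, sat R V φ w → sat R V' φ w) ∧
      (negativeIn p φ → ∀ w, sat R V' φ w → sat R V φ w) := by
  intro φ
  induction φ with
  | bot => simp [sat]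
  | top => simp [sat]
  | var q =>
    constructor
    · intro _ w hw
      by_cases hq : q = p
      · subst hq; exact hsub hw
      · simpa [sat, h q hq] using hw
    · intro hq w hw
      simp only [negativeIn] at hq
      simpa [sat, h q hq] using hw
  | neg φ ih =>
    exact ⟨fun hp w hw hc => hw (ih.2 hp w hc), fun hp w hw hc => hw (ih.1 hp w hc)⟩
  | or φ ψ ihφ ihψ =>
    exact ⟨fun hp w hw => hw.imp (ihφ.1 hp.1 w) (ihψ.1 hp.2 w),
      fun hp w hw => hw.imp (ihφ.2 hp.1 w) (ihψ.2 hp.2 w)⟩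
  | and φ ψ ihφ ihψ =>
    exact ⟨fun hp w hw => ⟨ihφ.1 hp.1 w hw.1, ihψ.1 hp.2 w hw.2⟩,
      fun hp w hw => ⟨ihφ.2 hp.1 w hw.1, ihψ.2 hp.2 w hw.2⟩⟩
  | dia φ ih =>
    exact ⟨fun hp w hw => hw.imp fun v hv => ⟨hv.1, ih.1 hp v hv.2⟩,
      fun hp w hw => hw.imp fun v hv => ⟨hv.1, ih.2 hp v hv.2⟩⟩
  | box φ ih =>
    exact ⟨fun hp w hw v hv => ih.1 hp v (hw v hv),
      fun hp w hw v hv => ih.2 hp v (hw v hv)⟩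

/-- Modal version of Ackermann's Lemma. -/
theorem modal_ackermann {W : Type} [Nonempty W] (R : W → W → Prop) (V : Nat → Set W)
    (A B : MF) (p : Nat) (hA : ¬ occurs p A) (hB : negativeIn p B) :
    (∀ w : W, sat R V (subst p A B) w) ↔
      ∃ V' : Nat → Set W, (∀ q, q ≠ p → V' q = V q) ∧
        (∀ w : W, sat R V' (MF.imp A (MF.var p)) w) ∧
        (∀ w : W, sat R V' B w) := by
  constructor
  · intro hw
    refine ⟨fun q => if q = p then {w | sat R V A w} else V q,
      fun q hq => if_neg hq, ?_, fun w => (sat_subst R V A p B w).mp (hw w)⟩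
    intro w
    simp only [MF.imp, sat]
    by_cases hAw : sat R V A w
    · exact Or.inr (by simpa [Set.mem_setOf_eq] using hAw)
    · exact Or.inl fun hc =>
        hAw ((sat_congr R V _ p (fun q hq => if_neg hq) A hA w).mp hc)
  · rintro ⟨V', hagree, hAp, hBw⟩ w
    set V'' : Nat → Set W := fun q => if q = p then {w | sat R V A w} else V q with hV''
    have hsub : V'' p ⊆ V' p := by
      intro v hv
      have hAv : sat R V A v := by simpa [hV''] using hv
      have hAv' : sat R V' A v := (sat_congr R V V' p hagree A hA v).mpr hAv
      rcases hAp v with h | h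
      · exact absurd hAv' h
      · exact h
    have heq : ∀ q, q ≠ p → V'' q = V' q := fun q hq => by
      simp [hV'', if_neg hq, (hagree q hq).symm]
    exact (sat_subst R V A p B w).mpr
      ((sat_mono R V'' V' p heq hsub B).2 hB w (hBw w))
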